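/- arXiv:1805.04006 — 6 statements merged into one kernel-verified Lean document; each statement's English description precedes it below -/
import Mathlib

section
/- For any real number a ∈ (0,1] and any nonzero real numbers x, y, one has |x|x|^{a−1} − y|y|^{a−1}| ≤ 2^{1−a}|x − y|^a. -/
open Real

private lemma aux_subadd {a u v : ℝ} (ha0 : 0 < a) (ha1 : a ≤ 1)
    (hu : 0 ≤ u) (hv : 0 ≤ v) : (u + v) ^ a ≤ u ^ a + v ^ a := by
  have h := NNReal.rpow_add_le_add_rpow u.toNNReal v.toNNReal ha0.le ha1
  have h2 := NNReal.coe_le_coe.2 h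
  push_cast at h2
  rwa [Real.coe_toNNReal u hu, Real.coe_toNNReal v hv] at h2

private lemma aux_mean {a u v : ℝ} (ha0 : 0 < a) (ha1 : a ≤ 1)
    (hu : 0 ≤ u) (hv : 0 ≤ v) :
    u ^ a + v ^ a ≤ (2 : ℝ) ^ (1 - a) * (u + v) ^ a := by
  have hc := (Real.concaveOn_rpow ha0.le ha1).2 (Set.mem_Ici.2 hu) (Set.mem_Ici.2 hv)
    (by norm_num : (0:ℝ) ≤ 1/2) (by norm_num : (0:ℝ) ≤ 1/2) (by norm_num)
  simp only [smul_eq_mul] at hc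
  have h2 : ((1/2 : ℝ) * u + (1/2) * v) = ((u + v)/2) := by ring
  rw [h2] at hc
  have hd : ((u + v)/2) ^ a = (u + v) ^ a / 2 ^ a := by
    rw [Real.div_rpow (by linarith) (by norm_num)]
  rw [hd] at hc
  have hr : (2 : ℝ) ^ (1 - a) = 2 / 2 ^ a := by
    rw [Real.rpow_sub (by norm_num), Real.rpow_one]
  rw [hr]
  calc u ^ a + v ^ a = 2 * ((1/2) * u ^ a + (1/2) * v ^ a) := by ring
    _ ≤ 2 * ((u + v) ^ a / 2 ^ a) := by linarith
    _ = 2 / 2 ^ a * (u + v) ^ a := by ring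

private lemma aux_one_le {a : ℝ} (ha1 : a ≤ 1) : (1 : ℝ) ≤ (2 : ℝ) ^ (1 - a) := by
  rw [show (1:ℝ) = (2:ℝ) ^ (0:ℝ) by simp]
  exact Real.rpow_le_rpow_of_exponent_le one_le_two (by linarith)

private lemma aux_pos {a x y : ℝ} (ha0 : 0 < a) (ha1 : a ≤ 1)
    (hx : 0 < x) (hy : 0 < y) :
    |x ^ a - y ^ a| ≤ (2 : ℝ) ^ (1 - a) * |x - y| ^ a := by
  wlog h : y ≤ x generalizing x y
  · have := this hy hx (le_of_not_ge h)
    rwa [abs_sub_comm (y^a), abs_sub_comm y x] at this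
  have hxy : 0 ≤ x - y := by linarith
  have hkey : x ^ a - y ^ a ≤ (x - y) ^ a := by
    have := aux_subadd ha0 ha1 hxy hy.le
    rw [sub_add_cancel] at this
    linarith
  have habs : |x ^ a - y ^ a| = x ^ a - y ^ a := by
    rw [abs_of_nonneg]
    have := Real.rpow_le_rpow hy.le h ha0.le
    linarith
  rw [habs, abs_of_nonneg hxy]
  calc x ^ a - y ^ a ≤ (x - y) ^ a := hkey
    _ = 1 * (x - y) ^ a := (one_mul _).symm
    _ ≤ (2 : ℝ) ^ (1 - a) * (x - y) ^ a := by
        apply mul_le_mul_of_nonneg_right (aux_one_le ha1)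
        exact Real.rpow_nonneg hxy a

private lemma aux_mixed {a x y : ℝ} (ha0 : 0 < a) (ha1 : a ≤ 1)
    (hx : 0 < x) (hy : y < 0) :
    |x ^ a - Real.sign y * |y| ^ a| ≤ (2 : ℝ) ^ (1 - a) * |x - y| ^ a := by
  rw [Real.sign_of_neg hy, abs_of_neg hy]
  have h1 : x ^ a - (-1) * (-y) ^ a = x ^ a + (-y) ^ a := by ring
  rw [h1]
  have hny : 0 < -y := by linarith
  have habs : |x ^ a + (-y) ^ a| = x ^ a + (-y) ^ a := by
    rw [abs_of_nonneg]
    have := Real.rpow_nonneg hx.le a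
    have := Real.rpow_nonneg hny.le a
    linarith
  rw [habs, abs_of_pos (by linarith : 0 < x - y)]
  have := aux_mean ha0 ha1 hx.le hny.le
  rwa [show x + -y = x - y by ring] at this

/-- For `a ∈ (0,1]` and nonzero reals `x, y`:
`|sign(x)|x|^a − sign(y)|y|^a| ≤ 2^(1−a)|x−y|^a`. -/
theorem stmt_4 (a x y : ℝ) (ha0 : 0 < a) (ha1 : a ≤ 1) (hx : x ≠ 0) (hy : y ≠ 0) :
    |Real.sign x * |x| ^ a - Real.sign y * |y| ^ a| ≤ (2 : ℝ) ^ (1 - a) * |x - y| ^ a := by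
  rcases hx.lt_or_gt with hxneg | hxpos <;> rcases hy.lt_or_gt with hyneg | hypos
  · -- both negative
    rw [Real.sign_of_neg hxneg, Real.sign_of_neg hyneg, abs_of_neg hxneg, abs_of_neg hyneg]
    have h1 : (-1) * (-x) ^ a - (-1) * (-y) ^ a = -((-x) ^ a - (-y) ^ a) := by ring
    rw [h1, abs_neg]
    have := aux_pos ha0 ha1 (by linarith : (0:ℝ) < -x) (by linarith : (0:ℝ) < -y)
    rwa [show -x - -y = -(x - y) by ring, abs_neg] at this
  · -- x < 0 < y
    have := aux_mixed ha0 ha1 hypos hxneg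
    rw [Real.sign_of_neg hxneg, abs_of_neg hxneg, Real.sign_of_pos hypos, abs_of_pos hypos]
    rw [Real.sign_of_neg hxneg, abs_of_neg hxneg] at this
    rw [show (-1:ℝ) * (-x) ^ a - 1 * y ^ a = -(y ^ a - (-1) * (-x) ^ a) by ring, abs_neg,
      abs_sub_comm x y]
    exact this
  · -- y < 0 < x
    have := aux_mixed ha0 ha1 hxpos hyneg
    rw [Real.sign_of_pos hxpos, abs_of_pos hxpos, one_mul]
    exact this
  · -- both positive
    rw [Real.sign_of_pos hxpos, Real.sign_of_pos hypos, abs_of_pos hxpos, abs_of_pos hypos,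
      one_mul, one_mul]
    exact aux_pos ha0 ha1 hxpos hypos
end

section
/- For every n ∈ ℕ with n ≥ 1 and every pair of symmetric d×d real matrices S and R, one has (S|S|^{1/n − 1} − R|R|^{1/n − 1}) : (S − R) ≥ (1/n)|S − R|² ∫₀¹ |R + θ(S − R)|^{1/n − 1} dθ ≥ 0, where the convention 0·|0|^{1/n−1} = 0 is used; moreover the left-hand side vanishes if and only if S = R. -/
open scoped BigOperators

noncomputable def fnorm {d : ℕ} (A : Matrix (Fin d) (Fin d) ℝ) : ℝ :=
  Real.sqrt (∑ i, ∑ j, (A i j) ^ 2)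

def finner {d : ℕ} (A B : Matrix (Fin d) (Fin d) ℝ) : ℝ :=
  ∑ i, ∑ j, A i j * B i j

/-!
Via the isometry `Matrix (Fin d) (Fin d) ℝ ≃ EuclideanSpace ℝ (Fin d × Fin d)` this is a statement
about a real inner product space, with `p = 1/n ∈ (0, 1]`. Put `h = x - y`, `z s = y + s • h` and
`g s = ⟪‖z s‖ ^ (p - 1) • z s, h⟫`, so that the right-hand side is `g 1 - g 0`. Wherever `z s ≠ 0`,
`g' = ‖z‖ ^ (p - 1) * ((p - 1) * (⟪z, h⟫ / ‖z‖) ^ 2 + ‖h‖ ^ 2) ≥ p * ‖h‖ ^ 2 * ‖z‖ ^ (p - 1)`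
by Cauchy–Schwarz and `p ≤ 1`. The segment passes through `0` at most once, so integrating this
bound on the two sides of that point gives the inequality; a nonnegative derivative is integrable,
which makes `‖z‖ ^ (p - 1)` integrable as well. Its integral is positive when `h ≠ 0`, which gives
the equality case.
-/

open MeasureTheory Set
open scoped RealInnerProductSpace

def Matrix.toEuclideanSpace {m n : Type*} [Fintype m] [Fintype n] :
    Matrix m n ℝ ≃ₗ[ℝ] EuclideanSpace ℝ (m × n) :=
  (LinearEquiv.curry ℝ ℝ m n).symm ≪≫ₗ (WithLp.linearEquiv 2 ℝ (m × n → ℝ)).symm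

@[simp]
theorem Matrix.toEuclideanSpace_apply {m n : Type*} [Fintype m] [Fintype n] (A : Matrix m n ℝ)
    (ij : m × n) : A.toEuclideanSpace ij = A ij.1 ij.2 :=
  rfl

theorem fnorm_eq_norm_toEuclideanSpace {d : ℕ} (A : Matrix (Fin d) (Fin d) ℝ) :
    fnorm A = ‖A.toEuclideanSpace‖ := by
  rw [EuclideanSpace.norm_eq, fnorm, Fintype.sum_prod_type]
  simp

theorem finner_eq_inner_toEuclideanSpace {d : ℕ} (A B : Matrix (Fin d) (Fin d) ℝ) :
    finner A B = ⟪A.toEuclideanSpace, B.toEuclideanSpace⟫ := by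
  rw [PiLp.inner_apply, finner, Fintype.sum_prod_type]
  simp [mul_comm]

section FTC

variable {g g' φ : ℝ → ℝ} {a b c : ℝ}

theorem intervalIntegrable_and_integral_le_sub_of_le_deriv (hab : a ≤ b)
    (hcont : ContinuousOn g (Icc a b)) (hderiv : ∀ x ∈ Ioo a b, HasDerivAt g (g' x) x)
    (hφm : AEStronglyMeasurable φ volume) (hφ0 : ∀ x ∈ Ioo a b, 0 ≤ φ x)
    (hφg : ∀ x ∈ Ioo a b, φ x ≤ g' x) :
    IntervalIntegrable φ volume a b ∧ ∫ x in a..b, φ x ≤ g b - g a := by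
  have hg'int : IntegrableOn g' (Ioo a b) :=
    (intervalIntegral.integrableOn_deriv_of_nonneg hcont hderiv
      fun x hx => (hφ0 x hx).trans (hφg x hx)).mono_set Ioo_subset_Ioc_self
  have hφint : IntegrableOn φ (Ioo a b) :=
    hg'int.mono' hφm.restrict <| (ae_restrict_mem measurableSet_Ioo).mono fun x hx => by
      rw [Real.norm_of_nonneg (hφ0 x hx)]
      exact hφg x hx
  exact ⟨(intervalIntegrable_iff_integrableOn_Ioo_of_le hab).2 hφint,
    intervalIntegral.integral_le_sub_of_hasDeriv_right_of_le hab hcont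
      (fun x hx => (hderiv x hx).hasDerivWithinAt)
      ((integrableOn_Icc_iff_integrableOn_Ioo).2 hφint) hφg⟩

theorem intervalIntegrable_and_integral_le_sub_of_le_deriv_off_point (hac : a ≤ c) (hcb : c ≤ b)
    (hcont : ContinuousOn g (Icc a b)) (hderiv : ∀ x ∈ Ioo a b, x ≠ c → HasDerivAt g (g' x) x)
    (hφm : AEStronglyMeasurable φ volume) (hφ0 : ∀ x ∈ Ioo a b, 0 ≤ φ x)
    (hφg : ∀ x ∈ Ioo a b, x ≠ c → φ x ≤ g' x) :
    IntervalIntegrable φ volume a b ∧ ∫ x in a..b, φ x ≤ g b - g a := by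
  have hleft := intervalIntegrable_and_integral_le_sub_of_le_deriv hac
    (hcont.mono (Icc_subset_Icc_right hcb))
    (fun x hx => hderiv x ⟨hx.1, hx.2.trans_le hcb⟩ hx.2.ne) hφm
    (fun x hx => hφ0 x ⟨hx.1, hx.2.trans_le hcb⟩)
    (fun x hx => hφg x ⟨hx.1, hx.2.trans_le hcb⟩ hx.2.ne)
  have hright := intervalIntegrable_and_integral_le_sub_of_le_deriv hcb
    (hcont.mono (Icc_subset_Icc_left hac))
    (fun x hx => hderiv x ⟨hac.trans_lt hx.1, hx.2⟩ hx.1.ne') hφm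
    (fun x hx => hφ0 x ⟨hac.trans_lt hx.1, hx.2⟩)
    (fun x hx => hφg x ⟨hac.trans_lt hx.1, hx.2⟩ hx.1.ne')
  refine ⟨hleft.1.trans hright.1, ?_⟩
  rw [← intervalIntegral.integral_add_adjacent_intervals hleft.1 hright.1]
  linarith [hleft.2, hright.2]

end FTC

section NormRpowSMul

variable {E : Type*} [NormedAddCommGroup E] [InnerProductSpace ℝ E] {p : ℝ}

theorem norm_norm_rpow_sub_one_smul_self (hp : p ≠ 0) (v : E) :
    ‖‖v‖ ^ (p - 1) • v‖ = ‖v‖ ^ p := by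
  rcases eq_or_ne v 0 with rfl | hv
  · simp [Real.zero_rpow hp]
  · have hv' : ‖v‖ ≠ 0 := norm_ne_zero_iff.2 hv
    rw [norm_smul, Real.norm_of_nonneg (by positivity), Real.rpow_sub_one hv',
      div_mul_cancel₀ _ hv']

theorem continuous_norm_rpow_sub_one_smul_self (hp : 0 < p) :
    Continuous fun v : E => ‖v‖ ^ (p - 1) • v := by
  refine continuous_iff_continuousAt.2 fun v => ?_
  rcases eq_or_ne v 0 with rfl | hv
  · rw [ContinuousAt, smul_zero, tendsto_zero_iff_norm_tendsto_zero]
    simp_rw [norm_norm_rpow_sub_one_smul_self hp.ne']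
    simpa [Real.zero_rpow hp.ne'] using
      (continuous_norm.rpow_const fun _ => Or.inr hp.le).tendsto (0 : E)
  · exact (continuous_norm.continuousAt.rpow_const (Or.inl (norm_ne_zero_iff.2 hv))).smul
      continuousAt_id

theorem HasDerivAt.norm {f : ℝ → E} {f' : E} {t : ℝ} (hf : HasDerivAt f f' t) (h0 : f t ≠ 0) :
    HasDerivAt (fun s => ‖f s‖) (⟪f t, f'⟫ / ‖f t‖) t := by
  have h := hf.norm_sq.sqrt (by positivity)
  simp only [Real.sqrt_sq (norm_nonneg _)] at h
  convert h using 1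
  field_simp

theorem hasDerivAt_inner_norm_rpow_sub_one_smul_line (p : ℝ) (y h : E) {t : ℝ}
    (ht : y + t • h ≠ 0) :
    HasDerivAt (fun s : ℝ => ⟪‖y + s • h‖ ^ (p - 1) • (y + s • h), h⟫)
      (‖y + t • h‖ ^ (p - 1) * ((p - 1) * (⟪y + t • h, h⟫ / ‖y + t • h‖) ^ 2 + ‖h‖ ^ 2)) t := by
  have hz : HasDerivAt (fun s : ℝ => y + s • h) h t := by
    simpa using ((hasDerivAt_id t).smul_const h).const_add y
  have hN := (hz.norm ht).rpow_const (p := p - 1) (Or.inl (norm_ne_zero_iff.2 ht))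
  have hI := hz.inner ℝ (hasDerivAt_const t h)
  simp only [real_inner_smul_left]
  refine (hN.mul hI).congr_deriv ?_
  rw [Real.rpow_sub_one (norm_ne_zero_iff.2 ht), inner_zero_right, zero_add,
    real_inner_self_eq_norm_sq]
  field_simp

theorem mul_norm_sq_mul_norm_rpow_le (hp : p ≤ 1) (z h : E) :
    p * ‖h‖ ^ 2 * ‖z‖ ^ (p - 1) ≤
      ‖z‖ ^ (p - 1) * ((p - 1) * (⟪z, h⟫ / ‖z‖) ^ 2 + ‖h‖ ^ 2) := by
  have hcs : (⟪z, h⟫ / ‖z‖) ^ 2 ≤ ‖h‖ ^ 2 := by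
    rcases eq_or_ne z 0 with rfl | hz
    · simp
    rw [div_pow, div_le_iff₀ (by positivity), ← sq_abs, ← mul_pow, mul_comm]
    exact pow_le_pow_left₀ (abs_nonneg _) (abs_real_inner_le_norm z h) 2
  nlinarith [mul_nonneg (Real.rpow_nonneg (norm_nonneg z) (p - 1))
    (mul_nonneg (sub_nonneg.2 hp) (sub_nonneg.2 hcs))]

theorem eq_of_add_smul_eq_zero {y h : E} (hh : h ≠ 0) {s t : ℝ} (hs : y + s • h = 0)
    (ht : y + t • h = 0) : s = t :=
  smul_left_injective ℝ hh (add_left_cancel (hs.trans ht.symm))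

theorem exists_mem_Icc_forall_add_smul_ne_zero (y : E) {h : E} (hh : h ≠ 0) :
    ∃ c ∈ Icc (0 : ℝ) 1, ∀ t ∈ Ioo (0 : ℝ) 1, t ≠ c → y + t • h ≠ 0 := by
  by_cases H : ∃ t₀ ∈ Ioo (0 : ℝ) 1, y + t₀ • h = 0
  · obtain ⟨t₀, ht₀, hz⟩ := H
    exact ⟨t₀, Ioo_subset_Icc_self ht₀,
      fun t _ htc hzt => htc (eq_of_add_smul_eq_zero hh hzt hz)⟩
  · push Not at H
    exact ⟨0, left_mem_Icc.2 zero_le_one, fun t ht _ => H t ht⟩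

theorem intervalIntegrable_and_mul_integral_le_inner (hp : 0 < p) (hp1 : p ≤ 1) (x y : E) :
    IntervalIntegrable (fun θ : ℝ => ‖y + θ • (x - y)‖ ^ (p - 1)) volume 0 1 ∧
      p * ‖x - y‖ ^ 2 * ∫ θ in (0 : ℝ)..1, ‖y + θ • (x - y)‖ ^ (p - 1) ≤
        ⟪‖x‖ ^ (p - 1) • x - ‖y‖ ^ (p - 1) • y, x - y⟫ := by
  set h := x - y with h_def
  rcases eq_or_ne h 0 with hh | hh
  · simp [hh]
  obtain ⟨c, hc, hzc⟩ := exists_mem_Icc_forall_add_smul_ne_zero y hh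
  have hph : p * ‖h‖ ^ 2 ≠ 0 := by positivity
  have hline : Continuous fun s : ℝ => y + s • h := by fun_prop
  obtain ⟨hint, hle⟩ := intervalIntegrable_and_integral_le_sub_of_le_deriv_off_point
    (g := fun s : ℝ => ⟪‖y + s • h‖ ^ (p - 1) • (y + s • h), h⟫)
    (φ := fun θ : ℝ => p * ‖h‖ ^ 2 * ‖y + θ • h‖ ^ (p - 1)) hc.1 hc.2
    (((continuous_norm_rpow_sub_one_smul_self hp).comp hline).inner continuous_const).continuousOn
    (fun t ht htc => hasDerivAt_inner_norm_rpow_sub_one_smul_line p y h (hzc t ht htc))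
    ((hline.norm.measurable.pow_const _).const_mul _).aestronglyMeasurable
    (fun t _ => by positivity)
    (fun t _ _ => mul_norm_sq_mul_norm_rpow_le hp1 _ h)
  have hint' := hint.const_mul (p * ‖h‖ ^ 2)⁻¹
  simp only [inv_mul_cancel_left₀ hph] at hint'
  refine ⟨hint', ?_⟩
  rw [← intervalIntegral.integral_const_mul]
  refine hle.trans_eq ?_
  simp [h_def, inner_sub_left]

theorem integral_norm_add_smul_rpow_pos (hp1 : p ≤ 1) (y : E) {h : E} (hh : h ≠ 0)
    (hint : IntervalIntegrable (fun θ : ℝ => ‖y + θ • h‖ ^ (p - 1)) volume 0 1) :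
    0 < ∫ θ in (0 : ℝ)..1, ‖y + θ • h‖ ^ (p - 1) := by
  have hM : 0 < ‖y‖ + ‖h‖ := by positivity
  have hae : ∀ᵐ θ : ℝ, y + θ • h ≠ 0 :=
    measure_eq_zero_iff_ae_notMem.1 <|
      Set.Subsingleton.measure_zero (fun s hs t ht => eq_of_add_smul_eq_zero hh hs ht) _
  calc 0 < ∫ _ in (0 : ℝ)..1, (‖y‖ + ‖h‖) ^ (p - 1) := by simpa using Real.rpow_pos_of_pos hM _
    _ ≤ ∫ θ in (0 : ℝ)..1, ‖y + θ • h‖ ^ (p - 1) := by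
      refine intervalIntegral.integral_mono_ae_restrict zero_le_one intervalIntegrable_const hint ?_
      filter_upwards [ae_restrict_of_ae hae, ae_restrict_mem measurableSet_Icc] with θ hz hθ
      refine Real.rpow_le_rpow_of_nonpos (norm_pos_iff.2 hz) ?_ (by linarith)
      calc ‖y + θ • h‖ ≤ ‖y‖ + |θ| * ‖h‖ := by simpa [norm_smul] using norm_add_le y (θ • h)
        _ ≤ ‖y‖ + ‖h‖ := by
          rw [abs_of_nonneg hθ.1]
          gcongr
          exact mul_le_of_le_one_left (norm_nonneg h) hθ.2

theorem inner_norm_rpow_sub_one_smul_sub_eq_zero_iff (hp : 0 < p) (hp1 : p ≤ 1) (x y : E) :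
    ⟪‖x‖ ^ (p - 1) • x - ‖y‖ ^ (p - 1) • y, x - y⟫ = 0 ↔ x = y := by
  refine ⟨fun h0 => ?_, by rintro rfl; simp⟩
  by_contra hxy
  have hh : x - y ≠ 0 := sub_ne_zero.2 hxy
  obtain ⟨hint, hle⟩ := intervalIntegrable_and_mul_integral_le_inner hp hp1 x y
  have hpos := integral_norm_add_smul_rpow_pos hp1 y hh hint
  have hc : 0 < p * ‖x - y‖ ^ 2 := by positivity
  linarith [mul_pos hc hpos]

end NormRpowSMul

theorem stmt_7_general (d n : ℕ) (hn : 1 ≤ n)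
    (S R : Matrix (Fin d) (Fin d) ℝ) :
    ((1 : ℝ) / n) * fnorm (S - R) ^ 2 *
        (∫ θ in (0:ℝ)..1, fnorm (R + θ • (S - R)) ^ ((1 : ℝ) / n - 1)) ≤
      finner ((fnorm S ^ ((1 : ℝ) / n - 1)) • S - (fnorm R ^ ((1 : ℝ) / n - 1)) • R) (S - R) ∧
    0 ≤ ((1 : ℝ) / n) * fnorm (S - R) ^ 2 *
        (∫ θ in (0:ℝ)..1, fnorm (R + θ • (S - R)) ^ ((1 : ℝ) / n - 1)) ∧
    (finner ((fnorm S ^ ((1 : ℝ) / n - 1)) • S - (fnorm R ^ ((1 : ℝ) / n - 1)) • R) (S - R) = 0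
      ↔ S = R) := by
  have hp : (0 : ℝ) < 1 / n := one_div_pos.2 (Nat.cast_pos.2 hn)
  have hp1 : (1 : ℝ) / n ≤ 1 := div_le_one_of_le₀ (by exact_mod_cast hn) (Nat.cast_nonneg n)
  simp only [fnorm_eq_norm_toEuclideanSpace, finner_eq_inner_toEuclideanSpace, map_sub, map_add,
    map_smul]
  refine ⟨(intervalIntegrable_and_mul_integral_le_inner hp hp1 _ _).2, ?_,
    (inner_norm_rpow_sub_one_smul_sub_eq_zero_iff hp hp1 _ _).trans
      Matrix.toEuclideanSpace.injective.eq_iff⟩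
  exact mul_nonneg (by positivity)
    (intervalIntegral.integral_nonneg zero_le_one fun θ _ => by positivity)

/-- For `n ≥ 1` and symmetric matrices `S, R`:
`(S|S|^{1/n-1} − R|R|^{1/n-1}) : (S − R) ≥ (1/n)|S−R|² ∫₀¹ |R+θ(S−R)|^{1/n−1} dθ ≥ 0`,
and the left-hand side vanishes iff `S = R`. (Here `0·|0|^{1/n−1} = 0` holds with the
`rpow` conventions, since `0 ^ (1/n−1) = 0` for `n ≥ 2` and the exponent is `0` for `n = 1`.) -/
theorem stmt_7 (d n : ℕ) (hd : 1 ≤ d) (hn : 1 ≤ n)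
    (S R : Matrix (Fin d) (Fin d) ℝ) (hS : S.IsSymm) (hR : R.IsSymm) :
    ((1 : ℝ) / n) * fnorm (S - R) ^ 2 *
        (∫ θ in (0:ℝ)..1, fnorm (R + θ • (S - R)) ^ ((1 : ℝ) / n - 1)) ≤
      finner ((fnorm S ^ ((1 : ℝ) / n - 1)) • S - (fnorm R ^ ((1 : ℝ) / n - 1)) • R) (S - R) ∧
    0 ≤ ((1 : ℝ) / n) * fnorm (S - R) ^ 2 *
        (∫ θ in (0:ℝ)..1, fnorm (R + θ • (S - R)) ^ ((1 : ℝ) / n - 1)) ∧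
    (finner ((fnorm S ^ ((1 : ℝ) / n - 1)) • S - (fnorm R ^ ((1 : ℝ) / n - 1)) • R) (S - R) = 0
      ↔ S = R) :=
  stmt_7_general d n hn S R
end

section
/- For every integer n ≥ 1 and all real numbers s, r, one has (s|s|^{1/n − 1} − r|r|^{1/n − 1})(s − r) = (1/n)|s − r|² ∫₀¹ |r + θ(s − r)|^{1/n − 1} dθ ≥ 0, with the convention 0·|0|^{1/n−1} = 0, and the expression equals 0 if and only if s = r. -/
/-! The substitution `x = r + θ (s - r)` turns the integral into `∫ x in r..s, |x| ^ (p - 1)`,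
which is computed by splitting at `0`: an antiderivative is `sign x * |x| ^ p / p`. Positivity and
the equality case come from strict monotonicity of the odd function `x ↦ sign x * |x| ^ p`. -/

open intervalIntegral MeasureTheory Set

section AbsRpow

variable {α : ℝ}

theorem intervalIntegrable_abs_rpow (hα : -1 < α) (a b : ℝ) :
    IntervalIntegrable (fun x : ℝ => |x| ^ α) volume a b := by
  suffices h : ∀ c, IntervalIntegrable (fun x : ℝ => |x| ^ α) volume 0 c from
    (h a).symm.trans (h b)
  intro c
  have hpos : IntervalIntegrable (fun x : ℝ => |x| ^ α) volume 0 |c| :=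
    (intervalIntegrable_rpow' hα).congr fun x hx => by
      rw [uIoc_of_le (abs_nonneg c)] at hx
      simp only [abs_of_pos hx.1]
  rcases abs_choice c with hc | hc
  · rwa [hc] at hpos
  · simpa [hc] using (IntervalIntegrable.iff_comp_neg).mp hpos

theorem integral_zero_abs_rpow (hα : -1 < α) (b : ℝ) :
    ∫ x in (0 : ℝ)..b, |x| ^ α = Real.sign b * |b| ^ (α + 1) / (α + 1) := by
  have hpos : ∀ c, 0 ≤ c → ∫ x in (0 : ℝ)..c, |x| ^ α = c ^ (α + 1) / (α + 1) := by
    intro c hc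
    rw [integral_congr (g := fun x => x ^ α) fun x hx => by
        rw [uIcc_of_le hc] at hx
        simp only [abs_of_nonneg hx.1], integral_rpow (Or.inl hα),
      Real.zero_rpow (by linarith), sub_zero]
  rcases lt_trichotomy b 0 with hb | rfl | hb
  · have := integral_comp_neg (a := 0) (b := b) fun x : ℝ => |x| ^ α
    simp only [abs_neg, neg_zero] at this
    rw [this, integral_symm, hpos (-b) (by linarith), Real.sign_of_neg hb, abs_of_neg hb]
    ring
  · simp
  · rw [hpos b hb.le, Real.sign_of_pos hb, abs_of_pos hb, one_mul]

theorem integral_abs_rpow (hα : -1 < α) (a b : ℝ) :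
    ∫ x in a..b, |x| ^ α
      = (Real.sign b * |b| ^ (α + 1) - Real.sign a * |a| ^ (α + 1)) / (α + 1) := by
  rw [← integral_add_adjacent_intervals (intervalIntegrable_abs_rpow hα a 0)
    (intervalIntegrable_abs_rpow hα 0 b), integral_symm, integral_zero_abs_rpow hα,
    integral_zero_abs_rpow hα]
  ring

end AbsRpow

theorem strictMono_sign_mul_abs_rpow {p : ℝ} (hp : 0 < p) :
    StrictMono fun x : ℝ => Real.sign x * |x| ^ p := by
  refine strictMono_of_odd_strictMonoOn_nonneg (fun x => by simp [Real.sign_neg]) ?_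
  intro x hx y hy hxy
  simp only
  rcases (mem_Ici.mp hx).eq_or_lt with rfl | hx
  · have hy : 0 < y := hxy
    simpa [Real.sign_of_pos hy, abs_of_pos hy] using Real.rpow_pos_of_pos hy p
  · rw [Real.sign_of_pos hx, Real.sign_of_pos (hx.trans hxy), abs_of_pos hx,
      abs_of_pos (hx.trans hxy), one_mul, one_mul]
    exact Real.rpow_lt_rpow hx.le hxy hp

theorem StrictMono.mul_sub_pos {f : ℝ → ℝ} (hf : StrictMono f) {s r : ℝ} (h : s ≠ r) :
    0 < (f s - f r) * (s - r) := by
  rcases h.lt_or_gt with h | h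
  · exact mul_pos_of_neg_of_neg (sub_neg.mpr (hf h)) (sub_neg.mpr h)
  · exact mul_pos (sub_pos.mpr (hf h)) (sub_pos.mpr h)

theorem integral_zero_one_comp_add_mul_sub {f : ℝ → ℝ} {s r : ℝ} (h : s ≠ r) :
    ∫ θ in (0 : ℝ)..1, f (r + θ * (s - r)) = (s - r)⁻¹ * ∫ x in r..s, f x := by
  have := integral_comp_mul_add (a := 0) (b := 1) f (sub_ne_zero.mpr h) r
  simp only [mul_zero, zero_add, mul_one, sub_add_cancel, smul_eq_mul] at this
  rw [← this]
  simp only [add_comm r, mul_comm]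

theorem sign_mul_abs_rpow_sub_mul_sub_eq_integral {p : ℝ} (hp : 0 < p) (s r : ℝ) :
    (Real.sign s * |s| ^ p - Real.sign r * |r| ^ p) * (s - r) =
      p * |s - r| ^ 2 * ∫ θ in (0 : ℝ)..1, |r + θ * (s - r)| ^ (p - 1) := by
  rcases eq_or_ne s r with rfl | h
  · simp
  rw [integral_zero_one_comp_add_mul_sub (f := fun x => |x| ^ (p - 1)) h,
    integral_abs_rpow (by linarith), sub_add_cancel, sq_abs]
  field_simp [sub_ne_zero.mpr h]

/-- For an integer `n ≥ 1` and reals `s, r` (writing `s|s|^{1/n−1} = sign(s)|s|^{1/n}`):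
`(s|s|^{1/n−1} − r|r|^{1/n−1})(s − r) = (1/n)|s−r|² ∫₀¹ |r+θ(s−r)|^{1/n−1} dθ ≥ 0`,
and the expression vanishes iff `s = r`. -/
theorem stmt_8 (n : ℕ) (hn : 1 ≤ n) (s r : ℝ) :
    ((Real.sign s * |s| ^ ((1 : ℝ) / n) - Real.sign r * |r| ^ ((1 : ℝ) / n)) * (s - r) =
      ((1 : ℝ) / n) * |s - r| ^ 2 *
        ∫ θ in (0:ℝ)..1, |r + θ * (s - r)| ^ ((1 : ℝ) / n - 1)) ∧
    0 ≤ (Real.sign s * |s| ^ ((1 : ℝ) / n) - Real.sign r * |r| ^ ((1 : ℝ) / n)) * (s - r) ∧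
    ((Real.sign s * |s| ^ ((1 : ℝ) / n) - Real.sign r * |r| ^ ((1 : ℝ) / n)) * (s - r) = 0
      ↔ s = r) := by
  have hp : (0 : ℝ) < 1 / n := one_div_pos.mpr (Nat.cast_pos.mpr hn)
  have hpos := fun h : s ≠ r => (strictMono_sign_mul_abs_rpow hp).mul_sub_pos h
  refine ⟨sign_mul_abs_rpow_sub_mul_sub_eq_integral hp s r, ?_, ?_⟩
  · rcases eq_or_ne s r with rfl | h
    · simp
    · exact (hpos h).le
  · exact ⟨fun h0 => by_contra fun h => (hpos h).ne' h0, fun h => by simp [h]⟩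
end

section
/- For every integer n ≥ 1 and every pair of symmetric d×d real matrices S, R, one has (S|S|^{1/n − 1} − R|R|^{1/n − 1}) : (S − R) ≥ (1/n)·|S − R|²/(|R| + |S − R|)^{1 − 1/n}, where the convention 0·|0|^{1/n−1}=0 is used and 0/0^{1−1/n} is interpreted as 0. -/
/-!
Put `φ z = ‖z‖ ^ (p - 1) • z`, `a = ‖x‖`, `b = ‖y‖`, `c = ‖x - y‖`. Then
`⟪φ x - φ y, x - y⟫ = a ^ (p - 1) ⟪x, x - y⟫ + b ^ (p - 1) ⟪y, y - x⟫`, and the two inner products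
add up to `c²`. If both are nonnegative, both weights are at least `m ^ (p - 1)` for
`m = min a b + c ≥ max a b`. If `⟪y, y - x⟫ < 0`, then `b < a`, Cauchy–Schwarz bounds that inner
product below by `-b c`, and the claim reduces to the tangent-line estimate
`p c (b + c) ^ (p - 1) ≤ (b + c) ^ p - b ^ p` for the concave function `t ^ p`. The remaining case
is the symmetric one. For matrices, `fnorm` and `finner` are the norm and inner product of
`EuclideanSpace ℝ (Fin d × Fin d)`, and `p = 1 / n`.
-/

open RealInnerProductSpace

theorem rpow_le_rpow_add_mul_rpow_sub_one_mul_sub {p x y : ℝ} (hp0 : 0 ≤ p) (hp1 : p ≤ 1)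
    (hx : 0 ≤ x) (hy : 0 < y) : x ^ p ≤ y ^ p + p * y ^ (p - 1) * (x - y) := by
  have hs : (-1 : ℝ) ≤ x / y - 1 := by linarith [div_nonneg hx hy.le]
  have h := rpow_one_add_le_one_add_mul_self hs hp0 hp1
  rw [add_sub_cancel, Real.div_rpow hx hy.le, div_le_iff₀ (by positivity)] at h
  rw [Real.rpow_sub_one hy.ne']
  calc x ^ p ≤ (1 + p * (x / y - 1)) * y ^ p := h
    _ = y ^ p + p * (y ^ p / y) * (x - y) := by field_simp

section InnerProductSpace

variable {E : Type*} [NormedAddCommGroup E] [InnerProductSpace ℝ E]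

theorem inner_smul_sub_smul_sub (α β : ℝ) (x y : E) :
    ⟪α • x - β • y, x - y⟫ = α * ⟪x, x - y⟫ + β * ⟪y, y - x⟫ := by
  rw [inner_sub_left, real_inner_smul_left, real_inner_smul_left, ← neg_sub x y, inner_neg_right]
  ring

theorem inner_sub_add_inner_sub (x y : E) : ⟪x, x - y⟫ + ⟪y, y - x⟫ = ‖x - y‖ ^ 2 := by
  rw [← real_inner_self_eq_norm_sq, ← neg_sub x y, inner_neg_right, inner_sub_left]
  ring

theorem norm_lt_norm_of_inner_sub_neg {x y : E} (h : ⟪y, y - x⟫ < 0) : ‖y‖ < ‖x‖ := by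
  rw [inner_sub_right, real_inner_self_eq_norm_sq, sub_neg] at h
  have := h.trans_le (real_inner_le_norm y x)
  rw [sq] at this
  exact lt_of_mul_lt_mul_left this (norm_nonneg y)

theorem rpow_sub_one_mul_inner_le {p m : ℝ} (hp1 : p ≤ 1) {x : E} (z : E) (hm : ‖x‖ ≤ m)
    (h : 0 ≤ ⟪x, z⟫) : m ^ (p - 1) * ⟪x, z⟫ ≤ ‖x‖ ^ (p - 1) * ⟪x, z⟫ := by
  rcases eq_or_ne x 0 with rfl | hx
  · simp
  exact mul_le_mul_of_nonneg_right
    (Real.rpow_le_rpow_of_nonpos (norm_pos_iff.2 hx) hm (by linarith)) h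

variable {p : ℝ}

theorem sq_mul_rpow_le_inner_of_inner_sub_nonneg (hp1 : p ≤ 1) {m : ℝ} {x y : E}
    (hxm : ‖x‖ ≤ m) (hym : ‖y‖ ≤ m) (hx : 0 ≤ ⟪x, x - y⟫) (hy : 0 ≤ ⟪y, y - x⟫) :
    ‖x - y‖ ^ 2 * m ^ (p - 1) ≤ ⟪‖x‖ ^ (p - 1) • x - ‖y‖ ^ (p - 1) • y, x - y⟫ := by
  rw [inner_smul_sub_smul_sub, ← inner_sub_add_inner_sub]
  linarith [rpow_sub_one_mul_inner_le hp1 _ hxm hx, rpow_sub_one_mul_inner_le hp1 _ hym hy]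

theorem mul_sq_mul_rpow_le_inner_of_inner_sub_neg (hp0 : 0 ≤ p) (hp1 : p ≤ 1) {x y : E}
    (h : ⟪y, y - x⟫ < 0) :
    p * ‖x - y‖ ^ 2 * (‖y‖ + ‖x - y‖) ^ (p - 1) ≤
      ⟪‖x‖ ^ (p - 1) • x - ‖y‖ ^ (p - 1) • y, x - y⟫ := by
  set a := ‖x‖
  set b := ‖y‖
  set c := ‖x - y‖
  set v := ⟪y, y - x⟫
  have hba : b < a := norm_lt_norm_of_inner_sub_neg h
  have hb : 0 < b := by
    refine (norm_nonneg y).lt_of_ne fun hb => h.ne' ?_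
    simp [v, norm_eq_zero.1 hb.symm]
  have hc : 0 ≤ c := norm_nonneg _
  have htri : a ≤ b + c := by simpa [a, b, c] using norm_le_norm_add_norm_sub' x y
  have hvc : -(b * c) ≤ v := by
    have hcs := abs_real_inner_le_norm y (y - x)
    rw [norm_sub_rev] at hcs
    exact (neg_le_neg hcs).trans (neg_abs_le v)
  have hab : a ^ (p - 1) ≤ b ^ (p - 1) := Real.rpow_le_rpow_of_nonpos hb hba.le (by linarith)
  have hbc : (b + c) ^ (p - 1) ≤ a ^ (p - 1) :=
    Real.rpow_le_rpow_of_nonpos (hb.trans hba) htri (by linarith)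
  have hE : ⟪a ^ (p - 1) • x - b ^ (p - 1) • y, x - y⟫ =
      a ^ (p - 1) * c ^ 2 + (b ^ (p - 1) - a ^ (p - 1)) * v := by
    rw [inner_smul_sub_smul_sub, ← inner_sub_add_inner_sub x y]
    ring
  calc p * c ^ 2 * (b + c) ^ (p - 1) = c * (p * (b + c) ^ (p - 1) * (b + c - b)) := by ring
    _ ≤ c * ((b + c) ^ p - b ^ p) := by
      gcongr
      have hbc_pos : 0 < b + c := by positivity
      linarith [rpow_le_rpow_add_mul_rpow_sub_one_mul_sub hp0 hp1 hb.le hbc_pos]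
    _ = c * ((b + c) ^ (p - 1) * (b + c) - b ^ (p - 1) * b) := by
      rw [Real.rpow_sub_one hb.ne', Real.rpow_sub_one (by positivity : b + c ≠ 0),
        div_mul_cancel₀ _ hb.ne', div_mul_cancel₀ _ (by positivity : b + c ≠ 0)]
    _ ≤ c * (a ^ (p - 1) * (b + c) - b ^ (p - 1) * b) := by gcongr
    _ = a ^ (p - 1) * c ^ 2 - (b ^ (p - 1) - a ^ (p - 1)) * (b * c) := by ring
    _ ≤ a ^ (p - 1) * c ^ 2 + (b ^ (p - 1) - a ^ (p - 1)) * v := by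
      nlinarith [mul_le_mul_of_nonneg_left hvc (sub_nonneg.2 hab)]
    _ = _ := hE.symm

theorem inner_rpow_smul_sub_symm (x y : E) :
    ⟪‖y‖ ^ (p - 1) • y - ‖x‖ ^ (p - 1) • x, y - x⟫ =
      ⟪‖x‖ ^ (p - 1) • x - ‖y‖ ^ (p - 1) • y, x - y⟫ := by
  rw [← neg_sub, ← neg_sub x y, inner_neg_neg]

theorem mul_sq_mul_rpow_min_le_inner (hp0 : 0 ≤ p) (hp1 : p ≤ 1) (x y : E) :
    p * ‖x - y‖ ^ 2 * (min ‖x‖ ‖y‖ + ‖x - y‖) ^ (p - 1) ≤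
      ⟪‖x‖ ^ (p - 1) • x - ‖y‖ ^ (p - 1) • y, x - y⟫ := by
  wlog hx : 0 ≤ ⟪x, x - y⟫ generalizing x y
  · have hy : 0 ≤ ⟪y, y - x⟫ := by linarith [inner_sub_add_inner_sub x y, sq_nonneg ‖x - y‖]
    simpa only [min_comm, norm_sub_rev, inner_rpow_smul_sub_symm] using this y x hy
  rcases le_or_gt 0 ⟪y, y - x⟫ with hy | hy
  · have hc := norm_nonneg (x - y)
    have hxm : ‖x‖ ≤ min ‖x‖ ‖y‖ + ‖x - y‖ := by
      rw [← min_add_add_right]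
      exact le_min (by linarith) (norm_le_norm_add_norm_sub' x y)
    have hym : ‖y‖ ≤ min ‖x‖ ‖y‖ + ‖x - y‖ := by
      rw [← min_add_add_right]
      exact le_min (norm_le_norm_add_norm_sub x y) (by linarith)
    rw [mul_assoc]
    refine (mul_le_of_le_one_left (by positivity) hp1).trans ?_
    exact sq_mul_rpow_le_inner_of_inner_sub_nonneg hp1 hxm hym hx hy
  · rw [min_eq_right (norm_lt_norm_of_inner_sub_neg hy).le]
    exact mul_sq_mul_rpow_le_inner_of_inner_sub_neg hp0 hp1 hy

theorem mul_sq_div_rpow_le_inner_rpow_smul_sub (hp0 : 0 ≤ p) (hp1 : p ≤ 1) (x y : E) :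
    p * ‖x - y‖ ^ 2 / (‖y‖ + ‖x - y‖) ^ (1 - p) ≤
      ⟪‖x‖ ^ (p - 1) • x - ‖y‖ ^ (p - 1) • y, x - y⟫ := by
  rcases eq_or_ne x y with rfl | hxy
  · simp
  have hc : 0 < ‖x - y‖ := norm_pos_iff.2 (sub_ne_zero.2 hxy)
  calc p * ‖x - y‖ ^ 2 / (‖y‖ + ‖x - y‖) ^ (1 - p)
      = p * ‖x - y‖ ^ 2 * (‖y‖ + ‖x - y‖) ^ (p - 1) := by
        rw [div_eq_mul_inv, ← Real.rpow_neg (by positivity), neg_sub]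
    _ ≤ p * ‖x - y‖ ^ 2 * (min ‖x‖ ‖y‖ + ‖x - y‖) ^ (p - 1) := by
      refine mul_le_mul_of_nonneg_left
        (Real.rpow_le_rpow_of_nonpos ?_ ?_ (by linarith)) (by positivity)
      · exact add_pos_of_nonneg_of_pos (le_min (norm_nonneg x) (norm_nonneg y)) hc
      · exact add_le_add_left (min_le_right _ _) _
    _ ≤ _ := mul_sq_mul_rpow_min_le_inner hp0 hp1 x y

end InnerProductSpace

noncomputable def matrixToEuclidean (d : ℕ) :
    Matrix (Fin d) (Fin d) ℝ →ₗ[ℝ] EuclideanSpace ℝ (Fin d × Fin d) where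
  toFun A := WithLp.toLp 2 fun ij => A ij.1 ij.2
  map_add' _ _ := rfl
  map_smul' _ _ := rfl

theorem matrixToEuclidean_apply {d : ℕ} (A : Matrix (Fin d) (Fin d) ℝ) (i j : Fin d) :
    matrixToEuclidean d A (i, j) = A i j :=
  rfl

theorem fnorm_eq_norm_matrixToEuclidean {d : ℕ} (A : Matrix (Fin d) (Fin d) ℝ) :
    fnorm A = ‖matrixToEuclidean d A‖ := by
  simp [fnorm, matrixToEuclidean_apply, EuclideanSpace.norm_eq, Fintype.sum_prod_type]

theorem finner_eq_inner_matrixToEuclidean {d : ℕ} (A B : Matrix (Fin d) (Fin d) ℝ) :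
    finner A B = ⟪matrixToEuclidean d A, matrixToEuclidean d B⟫ := by
  simp [finner, matrixToEuclidean_apply, PiLp.inner_apply, Fintype.sum_prod_type, mul_comm]

theorem stmt_9_general (d n : ℕ) (hn : 1 ≤ n)
    (S R : Matrix (Fin d) (Fin d) ℝ) :
    ((1 : ℝ) / n) * fnorm (S - R) ^ 2 / (fnorm R + fnorm (S - R)) ^ (1 - (1 : ℝ) / n) ≤
      finner ((fnorm S ^ ((1 : ℝ) / n - 1)) • S - (fnorm R ^ ((1 : ℝ) / n - 1)) • R)
        (S - R) := by
  have hp1 : (1 : ℝ) / n ≤ 1 := div_le_one_of_le₀ (by exact_mod_cast hn) (Nat.cast_nonneg n)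
  simp only [fnorm_eq_norm_matrixToEuclidean, finner_eq_inner_matrixToEuclidean, map_sub,
    map_smul]
  exact mul_sq_div_rpow_le_inner_rpow_smul_sub (by positivity) hp1 _ _

/-- For `n ≥ 1` and symmetric matrices `S, R`:
`(S|S|^{1/n−1} − R|R|^{1/n−1}) : (S − R) ≥ (1/n)·|S−R|²/(|R|+|S−R|)^{1−1/n}`. -/
theorem stmt_9 (d n : ℕ) (hd : 1 ≤ d) (hn : 1 ≤ n)
    (S R : Matrix (Fin d) (Fin d) ℝ) (hS : S.IsSymm) (hR : R.IsSymm) :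
    ((1 : ℝ) / n) * fnorm (S - R) ^ 2 / (fnorm R + fnorm (S - R)) ^ (1 - (1 : ℝ) / n) ≤
      finner ((fnorm S ^ ((1 : ℝ) / n - 1)) • S - (fnorm R ^ ((1 : ℝ) / n - 1)) • R)
        (S - R) :=
  stmt_9_general d n hn S R
end

section
/- Suppose λ : ℝ → ℝ and μ : [0,∞) → ℝ satisfy |λ(r)r − λ(s)s| ≤ Λ|r − s|^β for all r,s ∈ ℝ and |μ(|R|)R − μ(|S|)S| ≤ Λ|R − S|^β for all symmetric d×d matrices R, S, with Λ > 0 and β ∈ (0,1]. Then for every integer n ≥ 1 and all symmetric d×d matrices S, T with |S|, |T| ≤ K for some K ≥ 1, the map Aₙ(S) := λ(tr S)tr S·I + μ(|S^d|)S^d + (1/n)·tr(S)I/|tr S|^{1−1/n} + (1/n)·S^d/|S^d|^{1−1/n} satisfies |Aₙ(S) − Aₙ(T)| ≤ C·|S − T|^{min(β, 1/n)} for a constant C depending only on d, Λ, β, n and K. -/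
/-- The deviatoric part `S^d = S − (tr S / d) • I` of a matrix. -/
noncomputable def dev {d : ℕ} (S : Matrix (Fin d) (Fin d) ℝ) : Matrix (Fin d) (Fin d) ℝ :=
  S - (S.trace / (d : ℝ)) • (1 : Matrix (Fin d) (Fin d) ℝ)

/-- The regularized constitutive map
`Aₙ(S) = λ(tr S)tr S·I + μ(|S^d|)S^d + (1/n)·tr(S)I/|tr S|^{1−1/n} + (1/n)·S^d/|S^d|^{1−1/n}`
(with the convention `0/|0|^{1−1/n} = 0`, which holds with the `rpow`/division-by-zero
conventions used here). -/
noncomputable def Amap {d : ℕ} (n : ℕ) (l μ : ℝ → ℝ) (S : Matrix (Fin d) (Fin d) ℝ) :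
    Matrix (Fin d) (Fin d) ℝ :=
  (l S.trace * S.trace) • (1 : Matrix (Fin d) (Fin d) ℝ) + μ (fnorm (dev S)) • dev S +
    ((1 / n : ℝ) * (S.trace / |S.trace| ^ ((1 : ℝ) - 1 / n))) •
      (1 : Matrix (Fin d) (Fin d) ℝ) +
    ((1 / n : ℝ) / (fnorm (dev S)) ^ ((1 : ℝ) - 1 / n)) • dev S

/-!
With `α = 1/n` and `p x = ‖x‖^(α-1) • x` (so `p 0 = 0`), the regularising terms of `Aₙ` are
`p (tr S) I / n` and `p S^d / n`. In any normed space `p` is `α`-Hölder with constant `2`: when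
`‖x - y‖ ≥ ‖x‖ ≥ ‖y‖` use `‖p x‖ + ‖p y‖ = ‖x‖^α + ‖y‖^α`; otherwise split
`p x - p y = ‖x‖^(α-1) • (x - y) + (‖x‖^(α-1) - ‖y‖^(α-1)) • y` and use that `t ↦ t^(α-1)` is
decreasing. Since `|tr R| ≤ √d |R|` and `|R^d| ≤ 2|R|`, each of the four terms of `Aₙ` is Hölder
with exponent `β` or `α`. On the ball `|S|, |T| ≤ K` we have `|S - T| ≤ 2K`, hence
`|S - T|^q ≤ (2K)^(q - γ) |S - T|^γ` for `γ = min(β, α) ≤ q`.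
-/

open Real

lemma rpow_sub_one_mul_self {t α : ℝ} (ht : 0 ≤ t) (hα : α ≠ 0) : t ^ (α - 1) * t = t ^ α := by
  rw [← rpow_add_one' ht (by simpa using hα), sub_add_cancel]

lemma abs_rpow_sub_one_sub_mul_le {a b α : ℝ} (hb : 0 ≤ b) (hba : b ≤ a) (hα0 : 0 < α)
    (hα1 : α ≤ 1) : |a ^ (α - 1) - b ^ (α - 1)| * b ≤ a ^ (α - 1) * (a - b) := by
  rcases hb.eq_or_lt with rfl | hb
  · rw [mul_zero]
    exact mul_nonneg (rpow_nonneg (hb.trans hba) _) (by linarith)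
  have hmono : a ^ (α - 1) ≤ b ^ (α - 1) := rpow_le_rpow_of_nonpos hb hba (by linarith)
  rw [abs_of_nonpos (by linarith), neg_sub, sub_mul, mul_sub,
    rpow_sub_one_mul_self hb.le hα0.ne', rpow_sub_one_mul_self (hb.le.trans hba) hα0.ne']
  linarith [rpow_le_rpow hb.le hba hα0.le]

lemma rpow_le_rpow_sub_mul_rpow {e M p γ : ℝ} (he : 0 ≤ e) (heM : e ≤ M) (hγ : 0 < γ)
    (hγp : γ ≤ p) : e ^ p ≤ M ^ (p - γ) * e ^ γ := by
  rcases he.eq_or_lt with rfl | he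
  · rw [zero_rpow (by linarith), zero_rpow hγ.ne', mul_zero]
  · rw [← sub_add_cancel p γ, rpow_add he, add_sub_cancel_right]
    gcongr

section PowerMap

variable {E : Type*} [NormedAddCommGroup E] [NormedSpace ℝ E] {α : ℝ}

noncomputable def powerMap (α : ℝ) (x : E) : E := ‖x‖ ^ (α - 1) • x

lemma powerMap_eq_inv_rpow_smul (x : E) : powerMap α x = (‖x‖ ^ (1 - α))⁻¹ • x := by
  rw [powerMap, ← rpow_neg (norm_nonneg x), neg_sub]

lemma norm_powerMap (hα : α ≠ 0) (x : E) : ‖powerMap α x‖ = ‖x‖ ^ α := by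
  rw [powerMap, norm_smul, norm_of_nonneg (rpow_nonneg (norm_nonneg x) _),
    rpow_sub_one_mul_self (norm_nonneg x) hα]

lemma norm_powerMap_sub_le (hα0 : 0 < α) (hα1 : α ≤ 1) (x y : E) :
    ‖powerMap α x - powerMap α y‖ ≤ 2 * ‖x - y‖ ^ α := by
  wlog hyx : ‖y‖ ≤ ‖x‖ generalizing x y
  · rw [norm_sub_rev, norm_sub_rev x]
    exact this y x (le_of_not_ge hyx)
  rcases le_or_gt ‖x‖ ‖x - y‖ with hx | hx
  · have hy : ‖y‖ ≤ ‖x - y‖ := hyx.trans hx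
    calc ‖powerMap α x - powerMap α y‖ ≤ ‖powerMap α x‖ + ‖powerMap α y‖ := norm_sub_le _ _
      _ = ‖x‖ ^ α + ‖y‖ ^ α := by rw [norm_powerMap hα0.ne', norm_powerMap hα0.ne']
      _ ≤ 2 * ‖x - y‖ ^ α := by
        linarith [rpow_le_rpow (norm_nonneg x) hx hα0.le,
          rpow_le_rpow (norm_nonneg y) hy hα0.le]
  rcases (norm_nonneg (x - y)).eq_or_lt with hxy | hxy
  · obtain rfl : x = y := sub_eq_zero.mp (norm_eq_zero.mp hxy.symm)
    simp [zero_rpow hα0.ne']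
  set e := ‖x - y‖
  have he : ‖x‖ ^ (α - 1) * e ≤ e ^ α := by
    rw [← rpow_sub_one_mul_self hxy.le hα0.ne']
    exact mul_le_mul_of_nonneg_right (rpow_le_rpow_of_nonpos hxy hx.le (by linarith)) hxy.le
  have hdiff : |‖x‖ ^ (α - 1) - ‖y‖ ^ (α - 1)| * ‖y‖ ≤ ‖x‖ ^ (α - 1) * e :=
    (abs_rpow_sub_one_sub_mul_le (norm_nonneg y) hyx hα0 hα1).trans
      (mul_le_mul_of_nonneg_left (norm_sub_norm_le x y) (rpow_nonneg (norm_nonneg x) _))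
  calc ‖powerMap α x - powerMap α y‖
      = ‖‖x‖ ^ (α - 1) • (x - y) + (‖x‖ ^ (α - 1) - ‖y‖ ^ (α - 1)) • y‖ := by
        rw [powerMap, powerMap, smul_sub, sub_smul, sub_add_sub_cancel]
    _ ≤ ‖x‖ ^ (α - 1) * e + |‖x‖ ^ (α - 1) - ‖y‖ ^ (α - 1)| * ‖y‖ := by
        refine (norm_add_le _ _).trans_eq ?_
        rw [norm_smul, norm_smul, norm_of_nonneg (rpow_nonneg (norm_nonneg x) _),
          Real.norm_eq_abs]
    _ ≤ 2 * e ^ α := by linarith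

lemma norm_smul_powerMap_sub_le (hα0 : 0 < α) (hα1 : α ≤ 1) {c : ℝ} (hc : 0 ≤ c) (x y : E) :
    ‖c • powerMap α x - c • powerMap α y‖ ≤ 2 * c * ‖x - y‖ ^ α := by
  rw [← smul_sub, norm_smul, norm_of_nonneg hc, mul_comm 2, mul_assoc]
  exact mul_le_mul_of_nonneg_left (norm_powerMap_sub_le hα0 hα1 x y) hc

end PowerMap

lemma norm_add₄_sub_add₄_le {G : Type*} [SeminormedAddCommGroup G] (a b c d a' b' c' d' : G) :
    ‖(a + b + c + d) - (a' + b' + c' + d')‖ ≤ ‖a - a'‖ + ‖b - b'‖ + ‖c - c'‖ + ‖d - d'‖ := by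
  have h : (a + b + c + d) - (a' + b' + c' + d') = (a - a') + (b - b') + (c - c') + (d - d') := by
    abel
  exact h ▸ norm_add₄_le

section Frobenius

attribute [local instance] Matrix.frobeniusNormedAddCommGroup Matrix.frobeniusNormedSpace

variable {d : ℕ}

lemma fnorm_eq_norm (A : Matrix (Fin d) (Fin d) ℝ) : fnorm A = ‖A‖ := by
  simp [fnorm, Matrix.frobenius_norm_def, sqrt_eq_rpow, Real.norm_eq_abs, sq_abs]

lemma norm_one_eq_sqrt : ‖(1 : Matrix (Fin d) (Fin d) ℝ)‖ = √d := by
  simpa using congrArg NNReal.toReal (Matrix.frobenius_nnnorm_one (n := Fin d) (α := ℝ))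

lemma abs_trace_le_sqrt_mul_norm (A : Matrix (Fin d) (Fin d) ℝ) : |A.trace| ≤ √d * ‖A‖ := by
  rw [← fnorm_eq_norm, fnorm, ← sqrt_mul (Nat.cast_nonneg d)]
  refine abs_le_sqrt ?_
  calc A.trace ^ 2 ≤ d * ∑ i, A i i ^ 2 := by
        simpa [Matrix.trace] using
          sq_sum_le_card_mul_sum_sq (s := Finset.univ) (f := fun i => A i i)
    _ ≤ d * ∑ i, ∑ j, A i j ^ 2 := by
        gcongr with i
        exact Finset.single_le_sum (fun j _ => sq_nonneg (A i j)) (Finset.mem_univ i)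

lemma dev_sub (S T : Matrix (Fin d) (Fin d) ℝ) : dev S - dev T = dev (S - T) := by
  rw [dev, dev, dev, Matrix.trace_sub, sub_div, sub_smul]
  abel

lemma Matrix.IsSymm.dev {S : Matrix (Fin d) (Fin d) ℝ} (h : S.IsSymm) : (dev S).IsSymm := by
  rw [Matrix.IsSymm, _root_.dev, Matrix.transpose_sub, Matrix.transpose_smul,
    Matrix.transpose_one, h]

lemma norm_dev_le (A : Matrix (Fin d) (Fin d) ℝ) : ‖dev A‖ ≤ 2 * ‖A‖ := by
  have h : ‖(A.trace / d) • (1 : Matrix (Fin d) (Fin d) ℝ)‖ ≤ ‖A‖ := by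
    rw [norm_smul, norm_one_eq_sqrt, Real.norm_eq_abs, abs_div, Nat.abs_cast]
    calc |A.trace| / d * √d ≤ √d * ‖A‖ / d * √d := by
          gcongr; exact abs_trace_le_sqrt_mul_norm A
      _ = ‖A‖ * (√d * √d / d) := by ring
      _ ≤ ‖A‖ := by
          rw [mul_self_sqrt (Nat.cast_nonneg d)]
          exact mul_le_of_le_one_right (norm_nonneg A) (div_self_le_one _)
  calc ‖dev A‖ ≤ ‖A‖ + ‖(A.trace / d) • (1 : Matrix (Fin d) (Fin d) ℝ)‖ := norm_sub_le _ _
    _ ≤ 2 * ‖A‖ := by linarith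

lemma norm_smul_one_trace_sub_le {g : ℝ → ℝ} {c p : ℝ} (hc : 0 ≤ c) (hp : 0 ≤ p)
    (hg : ∀ r s, |g r - g s| ≤ c * |r - s| ^ p) (S T : Matrix (Fin d) (Fin d) ℝ) :
    ‖g S.trace • (1 : Matrix (Fin d) (Fin d) ℝ) - g T.trace • 1‖ ≤
      c * √d ^ p * √d * ‖S - T‖ ^ p := by
  rw [← sub_smul, norm_smul, norm_one_eq_sqrt, Real.norm_eq_abs]
  calc |g S.trace - g T.trace| * √d ≤ c * |(S - T).trace| ^ p * √d := by
        rw [Matrix.trace_sub]; gcongr; exact hg _ _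
    _ ≤ c * (√d * ‖S - T‖) ^ p * √d := by
        gcongr; exact abs_trace_le_sqrt_mul_norm _
    _ = c * √d ^ p * √d * ‖S - T‖ ^ p := by
        rw [mul_rpow (sqrt_nonneg _) (norm_nonneg _)]; ring

lemma norm_comp_dev_sub_le {F : Matrix (Fin d) (Fin d) ℝ → Matrix (Fin d) (Fin d) ℝ} {c p : ℝ}
    (hc : 0 ≤ c) (hp : 0 ≤ p)
    (hF : ∀ R R' : Matrix (Fin d) (Fin d) ℝ, R.IsSymm → R'.IsSymm →
      ‖F R - F R'‖ ≤ c * ‖R - R'‖ ^ p)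
    {S T : Matrix (Fin d) (Fin d) ℝ} (hS : S.IsSymm) (hT : T.IsSymm) :
    ‖F (dev S) - F (dev T)‖ ≤ c * 2 ^ p * ‖S - T‖ ^ p :=
  calc ‖F (dev S) - F (dev T)‖ ≤ c * ‖dev (S - T)‖ ^ p := dev_sub S T ▸ hF _ _ hS.dev hT.dev
    _ ≤ c * (2 * ‖S - T‖) ^ p := by gcongr; exact norm_dev_le _
    _ = c * 2 ^ p * ‖S - T‖ ^ p := by rw [mul_rpow zero_le_two (norm_nonneg _)]; ring

lemma Amap_eq (n : ℕ) (l μ : ℝ → ℝ) (S : Matrix (Fin d) (Fin d) ℝ) :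
    Amap n l μ S = (l S.trace * S.trace) • (1 : Matrix (Fin d) (Fin d) ℝ) + μ ‖dev S‖ • dev S +
      ((1 / n : ℝ) • powerMap (1 / n) S.trace) • (1 : Matrix (Fin d) (Fin d) ℝ) +
      (1 / n : ℝ) • powerMap (1 / n) (dev S) := by
  rw [Amap, fnorm_eq_norm, powerMap_eq_inv_rpow_smul, powerMap_eq_inv_rpow_smul, smul_smul,
    smul_eq_mul, Real.norm_eq_abs, mul_assoc, inv_mul_eq_div, smul_smul, ← div_eq_mul_inv]

lemma fnorm_sub_le (A B : Matrix (Fin d) (Fin d) ℝ) : fnorm (A - B) ≤ fnorm A + fnorm B := by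
  simpa only [fnorm_eq_norm] using norm_sub_le A B

lemma fnorm_Amap_sub_le {n : ℕ} (hn : 1 ≤ n) {β Λ : ℝ} (hβ : 0 ≤ β) (hΛ : 0 ≤ Λ)
    {l μ : ℝ → ℝ} (hl : ∀ r s : ℝ, |l r * r - l s * s| ≤ Λ * |r - s| ^ β)
    (hμ : ∀ R S : Matrix (Fin d) (Fin d) ℝ, R.IsSymm → S.IsSymm →
      fnorm (μ (fnorm R) • R - μ (fnorm S) • S) ≤ Λ * fnorm (R - S) ^ β)
    {S T : Matrix (Fin d) (Fin d) ℝ} (hS : S.IsSymm) (hT : T.IsSymm) :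
    fnorm (Amap n l μ S - Amap n l μ T) ≤
      Λ * (√d ^ β * √d + 2 ^ β) * fnorm (S - T) ^ β +
        2 / n * (√d ^ (1 / n : ℝ) * √d + 2 ^ (1 / n : ℝ)) * fnorm (S - T) ^ (1 / n : ℝ) := by
  have hn0 : (0 : ℝ) < n := by exact_mod_cast hn
  have hα0 : (0 : ℝ) < 1 / n := by positivity
  have hα1 : (1 / n : ℝ) ≤ 1 := div_le_one_of_le₀ (by exact_mod_cast hn) hn0.le
  have hl' := norm_smul_one_trace_sub_le hΛ hβ hl S T
  have hμ' := norm_comp_dev_sub_le (F := fun R => μ ‖R‖ • R) hΛ hβ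
    (by simpa only [fnorm_eq_norm] using hμ) hS hT
  have hpt := norm_smul_one_trace_sub_le (g := fun t => (1 / n : ℝ) • powerMap (1 / n) t)
    (c := 2 * (1 / n)) (by positivity) hα0.le
    (fun r s => by simpa only [Real.norm_eq_abs] using
      norm_smul_powerMap_sub_le hα0 hα1 hα0.le r s) S T
  have hpd := norm_comp_dev_sub_le (F := fun R => (1 / n : ℝ) • powerMap (1 / n) R)
    (c := 2 * (1 / n)) (by positivity) hα0.le
    (fun R R' _ _ => norm_smul_powerMap_sub_le hα0 hα1 hα0.le R R') hS hT
  rw [fnorm_eq_norm, fnorm_eq_norm, Amap_eq, Amap_eq]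
  calc _ ≤ _ := norm_add₄_sub_add₄_le _ _ _ _ _ _ _ _
    _ ≤ _ := add_le_add (add_le_add (add_le_add hl' hμ') hpt) hpd
    _ = _ := by ring

end Frobenius

theorem stmt_17_general (d n : ℕ) (hn : 1 ≤ n) (β Λ K : ℝ)
    (hβ0 : 0 < β) (hΛ : 0 < Λ) (hK : 1 ≤ K)
    (l μ : ℝ → ℝ)
    (hl : ∀ r s : ℝ, |l r * r - l s * s| ≤ Λ * |r - s| ^ β)
    (hμ : ∀ R S : Matrix (Fin d) (Fin d) ℝ, R.IsSymm → S.IsSymm →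
      fnorm (μ (fnorm R) • R - μ (fnorm S) • S) ≤ Λ * fnorm (R - S) ^ β) :
    ∃ C : ℝ, 0 < C ∧
      ∀ S T : Matrix (Fin d) (Fin d) ℝ, S.IsSymm → T.IsSymm →
        fnorm S ≤ K → fnorm T ≤ K →
        fnorm (Amap n l μ S - Amap n l μ T) ≤
          C * fnorm (S - T) ^ min β ((1 : ℝ) / n) := by
  have hn0 : (0 : ℝ) < n := by exact_mod_cast hn
  set α : ℝ := 1 / n
  set γ := min β α
  have hγ : 0 < γ := lt_min hβ0 (by positivity)
  set cβ := Λ * (√d ^ β * √d + 2 ^ β)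
  set cα := 2 / n * (√d ^ α * √d + 2 ^ α)
  refine ⟨cβ * (2 * K) ^ (β - γ) + cα * (2 * K) ^ (α - γ), by positivity, ?_⟩
  intro S T hS hT hSK hTK
  have he : 0 ≤ fnorm (S - T) := sqrt_nonneg _
  have hST : fnorm (S - T) ≤ 2 * K := by linarith [fnorm_sub_le S T]
  calc fnorm (Amap n l μ S - Amap n l μ T)
      ≤ cβ * fnorm (S - T) ^ β + cα * fnorm (S - T) ^ α :=
        fnorm_Amap_sub_le hn hβ0.le hΛ.le hl hμ hS hT
    _ ≤ cβ * ((2 * K) ^ (β - γ) * fnorm (S - T) ^ γ) +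
          cα * ((2 * K) ^ (α - γ) * fnorm (S - T) ^ γ) := by
        gcongr
        · exact rpow_le_rpow_sub_mul_rpow he hST hγ (min_le_left _ _)
        · exact rpow_le_rpow_sub_mul_rpow he hST hγ (min_le_right _ _)
    _ = _ := by ring

/-- Hölder continuity of `s ↦ λ(s)s` and `S ↦ μ(|S|)S` implies a Hölder bound, with
exponent `min(β, 1/n)`, for the regularized map `Aₙ` on the ball `{|S| ≤ K}`, with a
constant depending only on `d`, `Λ`, `β`, `n` and `K`. -/
theorem stmt_17 (d n : ℕ) (hd : 1 ≤ d) (hn : 1 ≤ n) (β Λ K : ℝ)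
    (hβ0 : 0 < β) (hβ1 : β ≤ 1) (hΛ : 0 < Λ) (hK : 1 ≤ K)
    (l μ : ℝ → ℝ)
    (hl : ∀ r s : ℝ, |l r * r - l s * s| ≤ Λ * |r - s| ^ β)
    (hμ : ∀ R S : Matrix (Fin d) (Fin d) ℝ, R.IsSymm → S.IsSymm →
      fnorm (μ (fnorm R) • R - μ (fnorm S) • S) ≤ Λ * fnorm (R - S) ^ β) :
    ∃ C : ℝ, 0 < C ∧
      ∀ S T : Matrix (Fin d) (Fin d) ℝ, S.IsSymm → T.IsSymm →
        fnorm S ≤ K → fnorm T ≤ K →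
        fnorm (Amap n l μ S - Amap n l μ T) ≤
          C * fnorm (S - T) ^ min β ((1 : ℝ) / n) :=
  stmt_17_general d n hn β Λ K hβ0 hΛ hK l μ hl hμ
end

section
/- Let Φₙ(s) := s²/(1+s)^{1−1/n} for s ≥ 0 with integer n ≥ 1, and let Φₙ*(s) := sup_{t ≥ 0}(st − Φₙ(t)) be its convex conjugate. Then there exist positive constants c₁ ≤ c₂ (depending on n) such that 0 ≤ Φₙ*(s) ≤ c₁s² for all s ∈ [0,1] and c₁ ≤ Φₙ*(s) ≤ c₂s^{n+1} for all s ∈ [1,∞). -/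
open Set

set_option maxHeartbeats 1000000 in
/-- For `Φₙ(s) = s²/(1+s)^{1−1/n}` and its convex conjugate
`Φₙ*(s) = sup_{t ≥ 0}(st − Φₙ(t))`, there exist constants `0 < c₁ ≤ c₂` (depending on `n`)
with `0 ≤ Φₙ*(s) ≤ c₁ s²` on `[0,1]` and `c₁ ≤ Φₙ*(s) ≤ c₂ s^{n+1}` on `[1,∞)`. -/
theorem stmt_18 (n : ℕ) (hn : 1 ≤ n) :
    let Φ : ℝ → ℝ := fun s => s ^ 2 / (1 + s) ^ ((1 : ℝ) - 1 / n)
    let Φstar : ℝ → ℝ := fun s => sSup {x : ℝ | ∃ t : ℝ, 0 ≤ t ∧ x = s * t - Φ t}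
    ∃ c₁ c₂ : ℝ, 0 < c₁ ∧ c₁ ≤ c₂ ∧
      (∀ s : ℝ, s ∈ Icc (0 : ℝ) 1 → 0 ≤ Φstar s ∧ Φstar s ≤ c₁ * s ^ 2) ∧
      (∀ s : ℝ, 1 ≤ s → c₁ ≤ Φstar s ∧ Φstar s ≤ c₂ * s ^ (n + 1)) := by
  intro Φ Φstar
  have hn' : (1:ℝ) ≤ (n:ℝ) := by exact_mod_cast hn
  have hnpos : (0:ℝ) < (n:ℝ) := lt_of_lt_of_le one_pos hn'
  set e : ℝ := (1:ℝ) - 1/(n:ℝ) with he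
  have he0 : 0 ≤ e := by
    have h1 : 1/(n:ℝ) ≤ 1 := by rw [div_le_one hnpos]; exact hn'
    simp only [he]; linarith
  have he1 : e ≤ 1 := by
    have h1 : 0 < 1/(n:ℝ) := by positivity
    simp only [he]; linarith
  have hΦdef : ∀ t : ℝ, Φ t = t ^ 2 / (1 + t) ^ e := fun t => rfl
  have hΦ0 : Φ 0 = 0 := by simp [hΦdef]
  have hΦnonneg : ∀ t : ℝ, 0 ≤ t → 0 ≤ Φ t := by
    intro t ht
    have h1 : (0:ℝ) < (1 + t) ^ e := Real.rpow_pos_of_pos (by linarith) e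
    rw [hΦdef]
    exact div_nonneg (sq_nonneg t) h1.le
  -- Φ t ≥ t^2/(1+t)
  have hΦlow : ∀ t : ℝ, 0 ≤ t → t ^ 2 / (1 + t) ≤ Φ t := by
    intro t ht
    have h1t : (1:ℝ) ≤ 1 + t := by linarith
    have hle : (1 + t) ^ e ≤ 1 + t := by
      calc (1 + t) ^ e ≤ (1 + t) ^ (1:ℝ) := Real.rpow_le_rpow_of_exponent_le h1t he1
        _ = 1 + t := Real.rpow_one _
    have hpos : (0:ℝ) < (1 + t) ^ e := Real.rpow_pos_of_pos (by linarith) e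
    rw [hΦdef]
    gcongr
  -- membership of 0
  have hmem0 : ∀ s : ℝ, (0:ℝ) ∈ {x : ℝ | ∃ t : ℝ, 0 ≤ t ∧ x = s * t - Φ t} := by
    intro s
    exact ⟨0, le_refl 0, by simp [hΦ0]⟩
  -- element bound for s ≥ 1
  have hbd : ∀ s : ℝ, 1 ≤ s → ∀ t : ℝ, 0 ≤ t → s * t - Φ t ≤ 2 ^ n * s ^ (n + 1) := by
    intro s hs t ht
    have hs0 : (0:ℝ) ≤ s := by linarith
    rcases le_total t ((2*s)^n) with hcase | hcase
    · have h1 : s * t - Φ t ≤ s * t := by linarith [hΦnonneg t ht]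
      have h2 : s * t ≤ s * (2*s)^n := mul_le_mul_of_nonneg_left hcase hs0
      have h3 : s * (2*s)^n = 2 ^ n * s ^ (n + 1) := by rw [mul_pow]; ring
      linarith
    · -- t ≥ (2s)^n, show s*t ≤ Φ t
      have h2s : (1:ℝ) ≤ 2*s := by linarith
      have hpowge : (1:ℝ) ≤ (2*s)^n := one_le_pow₀ h2s
      have ht1 : (1:ℝ) ≤ t := le_trans hpowge hcase
      have htpos : (0:ℝ) < t := by linarith
      have h2s0 : (0:ℝ) ≤ 2*s := by linarith
      -- (1+t)^e ≤ 2 * t^e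
      have hA : (1 + t) ^ e ≤ 2 * t ^ e := by
        have h1 : (1 + t) ≤ 2 * t := by linarith
        have h2 : (1 + t) ^ e ≤ (2*t) ^ e :=
          Real.rpow_le_rpow (by linarith) h1 he0
        have h3 : (2*t : ℝ) ^ e = 2 ^ e * t ^ e := Real.mul_rpow (by norm_num) ht
        have h4 : (2:ℝ) ^ e ≤ 2 := by
          calc (2:ℝ) ^ e ≤ (2:ℝ) ^ (1:ℝ) := Real.rpow_le_rpow_of_exponent_le one_le_two he1
            _ = 2 := Real.rpow_one _
        have h5 : (0:ℝ) ≤ t ^ e := (Real.rpow_pos_of_pos htpos e).le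
        nlinarith
      -- 2*s ≤ t^(1/n)
      have hB : 2*s ≤ t ^ ((1:ℝ)/n) := by
        have h1 : ((2*s)^n : ℝ) = (2*s) ^ (n:ℝ) := (Real.rpow_natCast _ n).symm
        have h2 : ((2*s) ^ (n:ℝ)) ^ ((1:ℝ)/n) = 2*s := by
          rw [← Real.rpow_mul h2s0, mul_one_div, div_self hnpos.ne', Real.rpow_one]
        calc 2*s = ((2*s) ^ (n:ℝ)) ^ ((1:ℝ)/n) := h2.symm
          _ ≤ t ^ ((1:ℝ)/n) := by
              apply Real.rpow_le_rpow (by positivity) _ (by positivity)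
              rw [← h1]; exact hcase
      -- combine: s * (1+t)^e ≤ t
      have hkey : s * (1 + t) ^ e ≤ t := by
        have h5 : (0:ℝ) ≤ t ^ e := (Real.rpow_pos_of_pos htpos e).le
        have h6 : (2*s) * t ^ e ≤ t ^ ((1:ℝ)/n) * t ^ e :=
          mul_le_mul_of_nonneg_right hB h5
        have h7 : t ^ ((1:ℝ)/n) * t ^ e = t := by
          rw [← Real.rpow_add htpos]
          have : (1:ℝ)/n + e = 1 := by simp [he]
          rw [this, Real.rpow_one]
        have h8 : s * (1 + t) ^ e ≤ s * (2 * t ^ e) := mul_le_mul_of_nonneg_left hA hs0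
        nlinarith
      have hst : s * t ≤ Φ t := by
        rw [hΦdef]
        have hpos : (0:ℝ) < (1 + t) ^ e := Real.rpow_pos_of_pos (by linarith) e
        rw [le_div_iff₀ hpos]
        nlinarith [mul_le_mul_of_nonneg_right hkey ht]
      have : (0:ℝ) ≤ 2 ^ n * s ^ (n+1) := by positivity
      linarith
  -- define c₁
  set S : ℝ → Set ℝ := fun s => {x : ℝ | ∃ t : ℝ, 0 ≤ t ∧ x = s * t - Φ t} with hS
  have hSne : ∀ s, (S s).Nonempty := fun s => ⟨0, hmem0 s⟩
  have hS1bdd : BddAbove (S 1) := by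
    refine ⟨2^n, fun x hx => ?_⟩
    obtain ⟨t, ht, rfl⟩ := hx
    have := hbd 1 le_rfl t ht
    simpa using this
  set c₁ : ℝ := sSup (S 1) with hc₁
  have hΦhalf : Φ (1/2) ≤ 1/4 := by
    have h1 : (1:ℝ) ≤ (1 + 1/2 : ℝ) ^ e := by
      calc (1:ℝ) = (1 + 1/2 : ℝ) ^ (0:ℝ) := by rw [Real.rpow_zero]
        _ ≤ (1 + 1/2 : ℝ) ^ e := Real.rpow_le_rpow_of_exponent_le (by norm_num) he0
    have hpos : (0:ℝ) < (1 + 1/2 : ℝ) ^ e := Real.rpow_pos_of_pos (by norm_num) e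
    rw [hΦdef, div_le_iff₀ hpos]
    nlinarith
  have hc₁low : (1/4 : ℝ) ≤ c₁ := by
    have hmem : (1/2 - Φ (1/2) : ℝ) ∈ S 1 := ⟨1/2, by norm_num, by rw [one_mul]⟩
    have h1 : (1/4:ℝ) ≤ 1/2 - Φ (1/2) := by linarith
    exact le_trans h1 (le_csSup hS1bdd hmem)
  have hc₁pos : (0:ℝ) < c₁ := by linarith
  have hc₁up : c₁ ≤ 2 ^ n := by
    apply csSup_le (hSne 1)
    rintro x ⟨t, ht, rfl⟩
    have := hbd 1 le_rfl t ht
    simpa using this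
  refine ⟨c₁, 2^n, hc₁pos, hc₁up, ?_, ?_⟩
  · -- s ∈ [0,1]
    rintro s ⟨hs0, hs1⟩
    -- bounded above by 1 on [0,1]
    have hSbdd : BddAbove (S s) := by
      refine ⟨1, fun x hx => ?_⟩
      obtain ⟨t, ht, rfl⟩ := hx
      have h1 : s * t ≤ t := by nlinarith
      have h2 : t ^ 2 / (1 + t) ≤ Φ t := hΦlow t ht
      have ht1 : (0:ℝ) < 1 + t := by linarith
      have heq : t - t ^ 2 / (1 + t) = t / (1 + t) := by
        field_simp
        ring
      have h3 : t / (1 + t) ≤ 1 := by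
        rw [div_le_one ht1]; linarith
      linarith
    constructor
    · exact le_csSup hSbdd (hmem0 s)
    · rcases eq_or_lt_of_le hs0 with hseq | hspos
      · -- s = 0
        have : Φstar s ≤ 0 := by
          apply csSup_le (hSne s)
          rintro x ⟨t, ht, rfl⟩
          rw [← hseq]
          simpa using hΦnonneg t ht
        nlinarith
      · -- 0 < s
        apply csSup_le (hSne s)
        rintro x ⟨t, ht, rfl⟩
        set u : ℝ := t / s with hu
        have hu0 : 0 ≤ u := div_nonneg ht hspos.le
        have htu : t = s * u := by rw [hu, mul_div_cancel₀ _ hspos.ne']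
        have hΦscale : s ^ 2 * Φ u ≤ Φ (s * u) := by
          rw [hΦdef, hΦdef]
          have hd1 : (0:ℝ) < (1 + s*u) ^ e := Real.rpow_pos_of_pos (by nlinarith) e
          have hd2 : (1 + s*u) ^ e ≤ (1 + u) ^ e := by
            apply Real.rpow_le_rpow (by nlinarith) _ he0
            nlinarith
          calc s ^ 2 * (u ^ 2 / (1 + u) ^ e) = (s*u)^2 / (1+u)^e := by ring
            _ ≤ (s*u)^2 / (1+s*u)^e := by gcongr
        have humem : u - Φ u ∈ S 1 := ⟨u, hu0, by rw [one_mul]⟩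
        have h1 : u - Φ u ≤ c₁ := le_csSup hS1bdd humem
        calc s * t - Φ t = s^2 * u - Φ (s*u) := by rw [htu]; ring
          _ ≤ s^2 * u - s^2 * Φ u := by linarith
          _ = s^2 * (u - Φ u) := by ring
          _ ≤ s^2 * c₁ := mul_le_mul_of_nonneg_left h1 (sq_nonneg s)
          _ = c₁ * s^2 := by ring
  · -- s ≥ 1
    intro s hs
    have hSbdd : BddAbove (S s) := by
      refine ⟨2^n * s^(n+1), fun x hx => ?_⟩
      obtain ⟨t, ht, rfl⟩ := hx
      exact hbd s hs t ht
    constructor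
    · apply csSup_le (hSne 1)
      rintro x ⟨t, ht, rfl⟩
      have h1 : 1 * t - Φ t ≤ s * t - Φ t := by nlinarith
      have h2 : s * t - Φ t ∈ S s := ⟨t, ht, rfl⟩
      exact le_trans h1 (le_csSup hSbdd h2)
    · apply csSup_le (hSne s)
      rintro x ⟨t, ht, rfl⟩
      exact hbd s hs t ht
end
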